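/- arXiv:2103.02014 — 9 statements merged into one kernel-verified Lean document; each statement's English description precedes it below -/
import Mathlib

section
/- Let f₁, f₂ : ℝ → ℝ be nonnegative decreasing functions (on the relevant ranges) and let a₁, a₂, b₁ be integers with a₂ ≤ a₁ and a₁ ≤ b₁. Then the nested sum ∑_{p₁=a₁}^{b₁} ∑_{p₂=a₂}^{p₁} f₁(p₁) f₂(p₂) is at least the nested integral ∫_{x₁=a₁}^{b₁+1} f₁(x₁) (∫_{x₂=a₂}^{x₁} f₂(x₂) dx₂) dx₁. -/
open MeasureTheory intervalIntegral Set

lemma sum_Icc_int_eq_range (a b : ℤ) (g : ℤ → ℝ) :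
    ∑ p ∈ Finset.Icc a b, g p = ∑ i ∈ Finset.range (b + 1 - a).toNat, g (a + i) := by
  refine Finset.sum_bij' (fun p _ => (p - a).toNat) (fun i _ => a + i) ?_ ?_ ?_ ?_ ?_
  · intro p hp; simp only [Finset.mem_Icc] at hp; simp only [Finset.mem_range]; omega
  · intro i hi; simp only [Finset.mem_range] at hi; simp only [Finset.mem_Icc]; omega
  · intro p hp; simp only [Finset.mem_Icc] at hp; omega
  · intro i hi; simp only [Finset.mem_range] at hi; omega
  · intro p hp; simp only [Finset.mem_Icc] at hp
    congr 1; omega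

/-- For nonnegative decreasing `f₁ f₂ : ℝ → ℝ` on `[a₂, b₁+1]` and
integers `a₂ ≤ a₁ ≤ b₁`, the nested sum
`∑_{p₁=a₁}^{b₁} ∑_{p₂=a₂}^{p₁} f₁(p₁) f₂(p₂)` is at least the nested integral
`∫_{a₁}^{b₁+1} f₁(x₁) (∫_{a₂}^{x₁} f₂(x₂) dx₂) dx₁`. -/
theorem nested_sum_ge_nested_integral
    (f₁ f₂ : ℝ → ℝ) (a₁ a₂ b₁ : ℤ) (h21 : a₂ ≤ a₁) (h1b : a₁ ≤ b₁)
    (hf₁anti : AntitoneOn f₁ (Set.Icc (a₂ : ℝ) ((b₁ : ℝ) + 1)))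
    (hf₂anti : AntitoneOn f₂ (Set.Icc (a₂ : ℝ) ((b₁ : ℝ) + 1)))
    (hf₁nonneg : ∀ x ∈ Set.Icc (a₂ : ℝ) ((b₁ : ℝ) + 1), 0 ≤ f₁ x)
    (hf₂nonneg : ∀ x ∈ Set.Icc (a₂ : ℝ) ((b₁ : ℝ) + 1), 0 ≤ f₂ x) :
    (∑ p₁ ∈ Finset.Icc a₁ b₁, ∑ p₂ ∈ Finset.Icc a₂ p₁, f₁ (p₁ : ℝ) * f₂ (p₂ : ℝ)) ≥
      ∫ x₁ in (a₁ : ℝ)..((b₁ : ℝ) + 1), f₁ x₁ * ∫ x₂ in (a₂ : ℝ)..x₁, f₂ x₂ := by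
  have h21' : (a₂ : ℝ) ≤ (a₁ : ℝ) := by exact_mod_cast h21
  have h1b' : (a₁ : ℝ) ≤ (b₁ : ℝ) := by exact_mod_cast h1b
  have hab : (a₂ : ℝ) ≤ (b₁ : ℝ) + 1 := by linarith
  set F : ℝ → ℝ := fun x => ∫ t in (a₂ : ℝ)..x, f₂ t with hFdef
  -- interval integrability of f₂ on subintervals
  have hf₂sub : ∀ c d : ℝ, (a₂ : ℝ) ≤ c → c ≤ d → d ≤ (b₁ : ℝ) + 1 →
      IntervalIntegrable f₂ volume c d := by
    intro c d h1 h2 h3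
    refine (hf₂anti.mono ?_).intervalIntegrable
    rw [uIcc_of_le h2]
    exact Icc_subset_Icc h1 h3
  have hf₂int : IntervalIntegrable f₂ volume (a₂ : ℝ) ((b₁ : ℝ) + 1) :=
    hf₂sub _ _ le_rfl hab le_rfl
  -- continuity of F
  have hFcont : ContinuousOn F (Icc (a₂ : ℝ) ((b₁ : ℝ) + 1)) := by
    have := continuousOn_primitive_interval' (a := (a₂ : ℝ)) hf₂int
      (by rw [uIcc_of_le hab]; exact ⟨le_rfl, hab⟩)
    rwa [uIcc_of_le hab] at this
  -- interval integrability of g = f₁ * F on subintervals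
  have hgint : ∀ c d : ℝ, (a₂ : ℝ) ≤ c → c ≤ d → d ≤ (b₁ : ℝ) + 1 →
      IntervalIntegrable (fun x => f₁ x * F x) volume c d := by
    intro c d h1 h2 h3
    have hsub : uIcc c d ⊆ Icc (a₂ : ℝ) ((b₁ : ℝ) + 1) := by
      rw [uIcc_of_le h2]; exact Icc_subset_Icc h1 h3
    exact ((hf₁anti.mono hsub).intervalIntegrable).mul_continuousOn (hFcont.mono hsub)
  -- F is nonneg and monotone-ish on the range
  have hFle : ∀ x y : ℝ, (a₂ : ℝ) ≤ x → x ≤ y → y ≤ (b₁ : ℝ) + 1 → F x ≤ F y := by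
    intro x y h1 h2 h3
    have hadd := integral_add_adjacent_intervals (hf₂sub _ _ le_rfl h1 (h2.trans h3))
      (hf₂sub _ _ h1 h2 h3)
    have hnn : 0 ≤ ∫ t in x..y, f₂ t := by
      apply integral_nonneg h2
      intro u hu
      exact hf₂nonneg u ⟨h1.trans hu.1, hu.2.trans h3⟩
    simp only [hFdef]
    linarith [hadd]
  have hFnn : ∀ x : ℝ, (a₂ : ℝ) ≤ x → x ≤ (b₁ : ℝ) + 1 → 0 ≤ F x := by
    intro x h1 h2
    apply integral_nonneg h1
    intro u hu
    exact hf₂nonneg u ⟨hu.1, hu.2.trans h2⟩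
  -- decompose the integral
  set n : ℕ := (b₁ + 1 - a₁).toNat with hn
  have hnz : (n : ℤ) = b₁ + 1 - a₁ := by omega
  have hdecomp : (∫ x₁ in (a₁ : ℝ)..((b₁ : ℝ) + 1), f₁ x₁ * F x₁) =
      ∑ k ∈ Finset.range n, ∫ x in ((a₁ : ℝ) + k)..((a₁ : ℝ) + (k + 1 : ℕ)),
        f₁ x * F x := by
    have hint : ∀ k : ℕ, k < n → IntervalIntegrable (fun x => f₁ x * F x) volume
        ((a₁ : ℝ) + k) ((a₁ : ℝ) + (k + 1 : ℕ)) := by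
      intro k hk
      apply hgint
      · linarith [Nat.cast_nonneg (α := ℝ) k]
      · push_cast; linarith
      · have : (k : ℝ) + 1 ≤ n := by exact_mod_cast Nat.succ_le_of_lt hk
        have hnr : (n : ℝ) = (b₁ : ℝ) + 1 - (a₁ : ℝ) := by exact_mod_cast hnz
        push_cast
        linarith
    have := intervalIntegral.sum_integral_adjacent_intervals
      (a := fun k : ℕ => (a₁ : ℝ) + k) (n := n) hint
    have hnr : (n : ℝ) = (b₁ : ℝ) + 1 - (a₁ : ℝ) := by exact_mod_cast hnz
    rw [show ((a₁ : ℝ) + ((0 : ℕ) : ℝ)) = (a₁ : ℝ) by simp,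
      show ((a₁ : ℝ) + ((n : ℕ) : ℝ)) = (b₁ : ℝ) + 1 by rw [hnr]; ring] at this
    exact this.symm
  rw [ge_iff_le, hdecomp, sum_Icc_int_eq_range a₁ b₁
    (fun p => ∑ p₂ ∈ Finset.Icc a₂ p, f₁ (p : ℝ) * f₂ (p₂ : ℝ))]
  apply Finset.sum_le_sum
  intro k hk
  rw [Finset.mem_range] at hk
  have hkz : (k : ℤ) ≤ b₁ - a₁ := by omega
  have hkr : (k : ℝ) ≤ (b₁ : ℝ) - a₁ := by exact_mod_cast hkz
  set c : ℝ := (a₁ : ℝ) + k with hc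
  have hc1 : (a₂ : ℝ) ≤ c := by
    have : (0 : ℝ) ≤ (k : ℝ) := Nat.cast_nonneg k
    simp only [hc]; linarith
  have hc2 : c + 1 ≤ (b₁ : ℝ) + 1 := by simp only [hc]; linarith
  have hbnd : ((a₁ : ℝ) + ((k + 1 : ℕ) : ℝ)) = c + 1 := by push_cast; simp only [hc]; ring
  rw [hbnd]
  -- Step B : F (c+1) ≤ sum of f₂
  have stepB : F (c + 1) ≤ ∑ p₂ ∈ Finset.Icc a₂ (a₁ + (k : ℤ)), f₂ (p₂ : ℝ) := by
    set m : ℕ := (a₁ + (k : ℤ) + 1 - a₂).toNat with hm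
    have hmz : (m : ℤ) = a₁ + (k : ℤ) + 1 - a₂ := by omega
    have hmr : ((m : ℕ) : ℝ) = c + 1 - (a₂ : ℝ) := by
      simp only [hc]; exact_mod_cast congrArg (Int.cast : ℤ → ℝ) hmz
    have hsum := AntitoneOn.integral_le_sum (x₀ := (a₂ : ℝ)) (a := m)
      (hf₂anti.mono (Icc_subset_Icc le_rfl (by rw [hmr]; linarith)))
    rw [show (a₂ : ℝ) + (m : ℕ) = c + 1 by rw [hmr]; ring] at hsum
    refine hsum.trans (le_of_eq ?_)
    rw [sum_Icc_int_eq_range a₂ (a₁ + (k : ℤ)) (fun p => f₂ (p : ℝ))]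
    have : (a₁ + (k : ℤ) + 1 - a₂).toNat = m := by omega
    rw [this]
    apply Finset.sum_congr rfl
    intro i _
    push_cast
    ring_nf
  -- Step A : pointwise bound then integral comparison
  have hf₁c_nn : 0 ≤ f₁ c := hf₁nonneg c ⟨hc1, by linarith⟩
  calc ∫ x in c..(c + 1), f₁ x * F x
      ≤ ∫ _ in c..(c + 1), f₁ c * F (c + 1) := by
        refine intervalIntegral.integral_mono_on (by linarith) (hgint c (c + 1) hc1 (by linarith) hc2)
          intervalIntegrable_const ?_
        intro x hx
        have hxm : x ∈ Icc (a₂ : ℝ) ((b₁ : ℝ) + 1) := ⟨hc1.trans hx.1, hx.2.trans hc2⟩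
        have h1 : f₁ x ≤ f₁ c := hf₁anti ⟨hc1, by linarith⟩ hxm hx.1
        have h2 : F x ≤ F (c + 1) := hFle x (c + 1) (hc1.trans hx.1) hx.2 hc2
        have h3 : 0 ≤ f₁ x := hf₁nonneg x hxm
        have h4 : 0 ≤ F (c + 1) := hFnn (c + 1) (by linarith) hc2
        calc f₁ x * F x ≤ f₁ x * F (c + 1) := mul_le_mul_of_nonneg_left h2 h3
          _ ≤ f₁ c * F (c + 1) := mul_le_mul_of_nonneg_right h1 h4
    _ = f₁ c * F (c + 1) := by simp
    _ ≤ f₁ c * ∑ p₂ ∈ Finset.Icc a₂ (a₁ + (k : ℤ)), f₂ (p₂ : ℝ) :=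
        mul_le_mul_of_nonneg_left stepB hf₁c_nn
    _ = ∑ p₂ ∈ Finset.Icc a₂ (a₁ + (k : ℤ)), f₁ ((a₁ + (k : ℤ) : ℤ) : ℝ) * f₂ (p₂ : ℝ) := by
        rw [Finset.mul_sum]
        apply Finset.sum_congr rfl
        intro p₂ _
        congr 1
        push_cast
        simp [hc]
end

section
/- Fix an integer k ≥ 2 and for 0 ≤ m ≤ k−1 define a_m := (−1)^{m+1} · (k^k/(k−1)^{k−m} − k^m)/m!. Then for every integer m with 0 ≤ m ≤ k−3, one has k(k−1)·a_m + (2k−1)(m+1)·a_{m+1} + (m+1)(m+2)·a_{m+2} = 0. -/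
/-- The coefficients `a_m := (−1)^{m+1} · (k^k/(k−1)^{k−m} − k^m)/m!` from the analysis
of the Virtual+ algorithm. -/
noncomputable def aCoeff (k m : ℕ) : ℝ :=
  (-1 : ℝ) ^ (m + 1) *
    ((k : ℝ) ^ k / ((k : ℝ) - 1) ^ (k - m) - (k : ℝ) ^ m) / (Nat.factorial m : ℝ)

/-- For an integer `k ≥ 2` and every integer `0 ≤ m ≤ k−3`,
`k(k−1)·a_m + (2k−1)(m+1)·a_{m+1} + (m+1)(m+2)·a_{m+2} = 0`. -/
theorem aCoeff_recurrence
    (k : ℕ) (hk : 2 ≤ k) (m : ℕ) (hm : m + 3 ≤ k) :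
    (k : ℝ) * ((k : ℝ) - 1) * aCoeff k m +
      (2 * (k : ℝ) - 1) * ((m : ℝ) + 1) * aCoeff k (m + 1) +
      ((m : ℝ) + 1) * ((m : ℝ) + 2) * aCoeff k (m + 2) = 0 := by
  obtain ⟨n, hn⟩ : ∃ n, k = m + 2 + n + 1 := ⟨k - (m + 3), by omega⟩
  have h1 : k - m = n + 3 := by omega
  have h2 : k - (m + 1) = n + 2 := by omega
  have h3 : k - (m + 2) = n + 1 := by omega
  have hx : ((k : ℝ) - 1) ≠ 0 := by
    have : (1 : ℝ) < (k : ℝ) := by exact_mod_cast Nat.lt_of_lt_of_le one_lt_two hk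
    linarith
  have hf : (Nat.factorial m : ℝ) ≠ 0 := by
    exact_mod_cast (Nat.factorial_pos m).ne'
  unfold aCoeff
  rw [h1, h2, h3, Nat.factorial_succ (m + 1), Nat.factorial_succ m]
  push_cast
  rw [show ((-1 : ℝ)) ^ (m + 1 + 1) = (-1) ^ (m + 1) * (-1) from by ring_nf,
      show ((-1 : ℝ)) ^ (m + 2 + 1) = (-1) ^ (m + 1) * 1 from by
        rw [show m + 2 + 1 = (m + 1) + 2 from by ring, pow_add]; norm_num,
      show ((k : ℝ) - 1) ^ (n + 3) = ((k : ℝ) - 1) ^ (n + 1) * ((k : ℝ) - 1) ^ 2 from by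
        rw [← pow_add],
      show ((k : ℝ) - 1) ^ (n + 2) = ((k : ℝ) - 1) ^ (n + 1) * ((k : ℝ) - 1) from by
        rw [← pow_succ]]
  have hxn : ((k : ℝ) - 1) ^ (n + 1) ≠ 0 := pow_ne_zero _ hx
  field_simp
  ring
end

section
/- Fix an integer k ≥ 2, for 0 ≤ m ≤ k−1 define a_m := (−1)^{m+1} · (k^k/(k−1)^{k−m} − k^m)/m!, and define f : (0,1] → ℝ by f(α) := α^k · ∑_{m=0}^{k−1} a_m (ln α)^m − α · a_0. Then for every α ∈ (0,1), the second derivative of f at α equals f''(α) = −k² · (α k ln(1/α))^{k−1} / (α · k!), which is ≤ 0; consequently f is concave on (0,1]. -/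
open Finset Real

/-- The function `f(α) := α^k · ∑_{m=0}^{k−1} a_m (ln α)^m − α · a_0` giving the
asymptotic lower bound on the competitive ratio of Virtual+. -/
noncomputable def fVirt (k : ℕ) (α : ℝ) : ℝ :=
  α ^ k * ∑ m ∈ Finset.range k, aCoeff k m * Real.log α ^ m - α * aCoeff k 0

noncomputable def cCoeff (k m : ℕ) : ℝ :=
  (-1 : ℝ) ^ (m + 1) * (k : ℝ) ^ k / ((Nat.factorial m : ℝ) * ((k : ℝ) - 1) ^ (k - m))

/-- The first derivative of `fVirt`. -/
noncomputable def fD (k : ℕ) (α : ℝ) : ℝ :=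
  α ^ (k-1) * ∑ m ∈ Finset.range k, cCoeff k m * Real.log α ^ m - aCoeff k 0

/-- derivative of a single term `x^n * (log x)^m` for `x > 0`, `n ≥ 1`. -/
lemma termDeriv (n m : ℕ) (hn : 1 ≤ n) {α : ℝ} (hα : 0 < α) :
    HasDerivAt (fun x : ℝ => x ^ n * Real.log x ^ m)
      (α ^ (n-1) * ((n:ℝ) * Real.log α ^ m + (m:ℝ) * Real.log α ^ (m-1))) α := by
  have h := (hasDerivAt_pow n α).mul ((Real.hasDerivAt_log hα.ne').pow m)
  refine h.congr_deriv ?_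
  obtain ⟨p, rfl⟩ := Nat.exists_eq_add_of_le hn
  simp only [Nat.add_sub_cancel, Nat.add_sub_cancel_left, Pi.pow_apply]
  field_simp
  ring

lemma sumHasDerivAt (n N : ℕ) (hn : 1 ≤ n) (b : ℕ → ℝ) {α : ℝ} (hα : 0 < α) :
    HasDerivAt (fun x : ℝ => x ^ n * ∑ m ∈ Finset.range N, b m * Real.log x ^ m)
      (α ^ (n-1) * ∑ m ∈ Finset.range N,
        b m * ((n:ℝ) * Real.log α ^ m + (m:ℝ) * Real.log α ^ (m-1))) α := by
  have hfun : ∀ x : ℝ, x ^ n * ∑ m ∈ Finset.range N, b m * Real.log x ^ m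
      = ∑ m ∈ Finset.range N, b m * (x ^ n * Real.log x ^ m) := by
    intro x; rw [Finset.mul_sum]; exact Finset.sum_congr rfl fun m _ => by ring
  simp only [hfun]
  have h := HasDerivAt.sum (u := Finset.range N)
    (fun m _ => ((termDeriv n m hn hα).const_mul (b m)))
  convert h using 1
  · rfl
  · rfl
  · ext x; simp [Finset.sum_apply]
  rw [Finset.mul_sum]; exact Finset.sum_congr rfl fun m _ => by ring

lemma sumShift (M : ℕ) (b : ℕ → ℝ) (c L : ℝ) :
    ∑ m ∈ Finset.range (M+1), b m * (c * L ^ m + (m:ℝ) * L ^ (m-1))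
      = ∑ m ∈ Finset.range M, (c * b m + ((m:ℝ)+1) * b (m+1)) * L ^ m
        + c * b M * L ^ M := by
  simp only [mul_add, Finset.sum_add_distrib]
  rw [Finset.sum_range_succ (fun m => b m * (c * L ^ m)),
    Finset.sum_range_succ' (fun m => b m * ((m:ℝ) * L ^ (m-1)))]
  simp only [Nat.cast_zero, zero_mul, mul_zero, add_zero, Nat.cast_add, Nat.cast_one,
    Nat.add_sub_cancel]
  rw [add_right_comm, ← Finset.sum_add_distrib]
  congr 1
  · exact Finset.sum_congr rfl fun m _ => by ring
  · ring

section
variable {k : ℕ} (hk : 2 ≤ k)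
include hk

lemma hK1ne : ((k:ℝ) - 1) ≠ 0 := by
  have : (2:ℝ) ≤ (k:ℝ) := by exact_mod_cast hk
  linarith

lemma identA {m : ℕ} (hm : m < k - 1) :
    (k:ℝ) * aCoeff k m + ((m:ℝ)+1) * aCoeff k (m+1) = cCoeff k m := by
  have h1 : k - m = (k - (m+1)) + 1 := by omega
  have hne := hK1ne hk
  have hPne : ((k:ℝ) - 1) ^ (k - (m+1)) ≠ 0 := pow_ne_zero _ hne
  have hFne : ((Nat.factorial m : ℝ)) ≠ 0 := Nat.cast_ne_zero.2 (Nat.factorial_ne_zero m)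
  simp only [aCoeff, cCoeff, h1, pow_succ, Nat.factorial_succ, Nat.cast_mul, Nat.cast_add,
    Nat.cast_one]
  field_simp
  ring

lemma identB :
    (k:ℝ) * aCoeff k (k-1) = cCoeff k (k-1) := by
  have h1 : k - (k-1) = 1 := by omega
  have h2 : (k-1) + 1 = k := by omega
  have hne := hK1ne hk
  have hFne : ((Nat.factorial (k-1) : ℝ)) ≠ 0 := Nat.cast_ne_zero.2 (Nat.factorial_ne_zero _)
  have hKpow : (k:ℝ) ^ k = (k:ℝ) ^ (k-1) * (k:ℝ) := by
    rw [← pow_succ, h2]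
  simp only [aCoeff, cCoeff, h1, pow_one]
  rw [hKpow]
  field_simp
  ring

lemma identC {m : ℕ} (hm : m < k - 1) :
    ((k:ℝ) - 1) * cCoeff k m + ((m:ℝ)+1) * cCoeff k (m+1) = 0 := by
  have h1 : k - m = (k - (m+1)) + 1 := by omega
  have hne := hK1ne hk
  have hPne : ((k:ℝ) - 1) ^ (k - (m+1)) ≠ 0 := pow_ne_zero _ hne
  have hFne : ((Nat.factorial m : ℝ)) ≠ 0 := Nat.cast_ne_zero.2 (Nat.factorial_ne_zero m)
  simp only [cCoeff, h1, pow_succ, Nat.factorial_succ, Nat.cast_mul, Nat.cast_add, Nat.cast_one]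
  field_simp
  ring

lemma identD :
    ((k:ℝ) - 1) * cCoeff k (k-1) = (-1:ℝ)^k * (k:ℝ)^k / (Nat.factorial (k-1) : ℝ) := by
  have h1 : k - (k-1) = 1 := by omega
  have h2 : (k-1) + 1 = k := by omega
  have hne := hK1ne hk
  have hFne : ((Nat.factorial (k-1) : ℝ)) ≠ 0 := Nat.cast_ne_zero.2 (Nat.factorial_ne_zero _)
  simp only [cCoeff, h1, pow_one, h2]
  field_simp

lemma fVirt_hasDerivAt {α : ℝ} (hα : 0 < α) :
    HasDerivAt (fVirt k) (fD k α) α := by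
  have h1 := (sumHasDerivAt k k (by omega) (aCoeff k) hα).sub
    ((hasDerivAt_id α).mul_const (aCoeff k 0))
  have hfun : fVirt k = fun x : ℝ =>
      (x ^ k * ∑ m ∈ Finset.range k, aCoeff k m * Real.log x ^ m) - x * aCoeff k 0 := rfl
  rw [hfun]
  refine h1.congr_deriv ?_
  have hrange : Finset.range k = Finset.range ((k-1)+1) := by
    congr 1; omega
  have e1 : ∑ m ∈ Finset.range k,
      aCoeff k m * ((k:ℝ) * Real.log α ^ m + (m:ℝ) * Real.log α ^ (m-1))
      = ∑ m ∈ Finset.range k, cCoeff k m * Real.log α ^ m := by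
    rw [hrange, sumShift, Finset.sum_range_succ]
    congr 1
    · refine Finset.sum_congr rfl fun m hm => ?_
      rw [identA hk (Finset.mem_range.1 hm)]
    · rw [identB hk]
  rw [fD, e1]
  ring

lemma fD_hasDerivAt {α : ℝ} (hα : 0 < α) :
    HasDerivAt (fD k)
      (α ^ (k-2) * ((-1:ℝ)^k * (k:ℝ)^k / (Nat.factorial (k-1) : ℝ)) *
        Real.log α ^ (k-1)) α := by
  have h1 := (sumHasDerivAt (k-1) k (by omega) (cCoeff k) hα).sub_const (aCoeff k 0)
  have hfun : fD k = fun x : ℝ =>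
      (x ^ (k-1) * ∑ m ∈ Finset.range k, cCoeff k m * Real.log x ^ m) - aCoeff k 0 := rfl
  rw [hfun]
  refine h1.congr_deriv ?_
  have hrange : Finset.range k = Finset.range ((k-1)+1) := by
    congr 1; omega
  have hcast : ((k-1 : ℕ):ℝ) = (k:ℝ) - 1 := by
    rw [Nat.cast_sub (by omega : 1 ≤ k), Nat.cast_one]
  have e1 : ∑ m ∈ Finset.range k,
      cCoeff k m * (((k-1:ℕ):ℝ) * Real.log α ^ m + (m:ℝ) * Real.log α ^ (m-1))
      = ((k:ℝ)-1) * cCoeff k (k-1) * Real.log α ^ (k-1) := by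
    rw [hrange, sumShift, hcast]
    have hz : ∑ m ∈ Finset.range (k-1),
        (((k:ℝ)-1) * cCoeff k m + ((m:ℝ)+1) * cCoeff k (m+1)) * Real.log α ^ m = 0 :=
      Finset.sum_eq_zero fun m hm => by
        rw [identC hk (Finset.mem_range.1 hm), zero_mul]
    rw [hz, zero_add]
  rw [e1, identD hk]
  have h2 : k - 1 - 1 = k - 2 := by omega
  rw [h2]
  ring

end

/-- For an integer `k ≥ 2`, for every `α ∈ (0,1)` the second derivative
of `f` at `α` equals `−k² · (α k ln(1/α))^{k−1} / (α · k!)`, which is `≤ 0`;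
consequently `f` is concave on `(0,1]`. -/
theorem fVirt_second_deriv_and_concave
    (k : ℕ) (hk : 2 ≤ k) :
    (∀ α ∈ Set.Ioo (0 : ℝ) 1,
      deriv (deriv (fVirt k)) α =
        -(k : ℝ) ^ 2 * (α * (k : ℝ) * Real.log (1 / α)) ^ (k - 1) /
          (α * (Nat.factorial k : ℝ)) ∧
      deriv (deriv (fVirt k)) α ≤ 0) ∧
    ConcaveOn ℝ (Set.Ioc (0 : ℝ) 1) (fVirt k) := by
  have hderiv1 : ∀ x ∈ Set.Ioi (0:ℝ), deriv (fVirt k) x = fD k x :=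
    fun x hx => (fVirt_hasDerivAt hk hx).deriv
  have hd2 : ∀ α ∈ Set.Ioo (0:ℝ) 1, deriv (deriv (fVirt k)) α
      = α ^ (k-2) * ((-1:ℝ)^k * (k:ℝ)^k / (Nat.factorial (k-1) : ℝ)) *
        Real.log α ^ (k-1) := by
    intro α hα
    have hmem : Set.Ioi (0:ℝ) ∈ nhds α := Ioi_mem_nhds hα.1
    have hev : deriv (fVirt k) =ᶠ[nhds α] fD k :=
      Filter.eventuallyEq_of_mem hmem hderiv1
    rw [hev.deriv_eq]
    exact (fD_hasDerivAt hk hα.1).deriv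
  have htarget : ∀ α ∈ Set.Ioo (0:ℝ) 1,
      α ^ (k-2) * ((-1:ℝ)^k * (k:ℝ)^k / (Nat.factorial (k-1) : ℝ)) * Real.log α ^ (k-1)
      = -(k : ℝ) ^ 2 * (α * (k : ℝ) * Real.log (1 / α)) ^ (k - 1) /
          (α * (Nat.factorial k : ℝ)) := by
    intro α hα
    obtain ⟨p, rfl⟩ : ∃ p, k = p + 2 := ⟨k - 2, by omega⟩
    have h1 : p + 2 - 1 = p + 1 := by omega
    have h2 : p + 2 - 2 = p := by omega
    have hfac : (Nat.factorial (p+2) : ℝ) = ((p:ℝ)+2) * (Nat.factorial (p+1) : ℝ) := by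
      rw [Nat.factorial_succ]
      push_cast
      ring
    have hFne : ((Nat.factorial (p+1) : ℝ)) ≠ 0 := Nat.cast_ne_zero.2 (Nat.factorial_ne_zero _)
    have hαne : α ≠ 0 := hα.1.ne'
    rw [one_div, Real.log_inv, h1, h2, hfac]
    push_cast
    have hneg : (α * ((p:ℝ)+2) * -Real.log α) ^ (p+1)
        = (-1:ℝ)^(p+1) * (α ^ (p+1) * ((p:ℝ)+2)^(p+1) * Real.log α ^ (p+1)) := by
      rw [show α * ((p:ℝ)+2) * -Real.log α = -(α * (((p:ℝ)+2) * Real.log α)) by ring,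
        neg_pow, mul_pow, mul_pow]
      ring
    rw [hneg]
    have hp2ne : ((p:ℝ)+2) ≠ 0 := by positivity
    field_simp
    ring
  have hle : ∀ α ∈ Set.Ioo (0:ℝ) 1,
      -(k : ℝ) ^ 2 * (α * (k : ℝ) * Real.log (1 / α)) ^ (k - 1) /
          (α * (Nat.factorial k : ℝ)) ≤ 0 := by
    intro α hα
    have hL : 0 ≤ Real.log (1 / α) :=
      Real.log_nonneg ((one_le_div hα.1).2 hα.2.le)
    have hbase : 0 ≤ α * (k:ℝ) * Real.log (1/α) :=
      mul_nonneg (mul_nonneg hα.1.le (Nat.cast_nonneg k)) hL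
    have hnum : -(k : ℝ) ^ 2 * (α * (k : ℝ) * Real.log (1 / α)) ^ (k - 1) ≤ 0 :=
      mul_nonpos_iff.2 (Or.inr ⟨neg_nonpos.2 (sq_nonneg _), pow_nonneg hbase _⟩)
    have hden : 0 < α * (Nat.factorial k : ℝ) := by
      have hfp : 0 < (Nat.factorial k : ℝ) := by exact_mod_cast Nat.factorial_pos k
      exact mul_pos hα.1 hfp
    exact div_nonpos_of_nonpos_of_nonneg hnum hden.le
  constructor
  · intro α hα
    have heq := (hd2 α hα).trans (htarget α hα)
    exact ⟨heq, heq ▸ hle α hα⟩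
  · apply concaveOn_of_deriv2_nonpos (convex_Ioc 0 1)
    · intro x hx
      exact (fVirt_hasDerivAt hk hx.1).continuousAt.continuousWithinAt
    · rw [interior_Ioc]
      intro x hx
      exact (fVirt_hasDerivAt hk hx.1).differentiableAt.differentiableWithinAt
    · rw [interior_Ioc]
      intro x hx
      have hmem : Set.Ioi (0:ℝ) ∈ nhds x := Ioi_mem_nhds hx.1
      have hev : deriv (fVirt k) =ᶠ[nhds x] fD k :=
        Filter.eventuallyEq_of_mem hmem hderiv1
      exact ((fD_hasDerivAt hk hx.1).congr_of_eventuallyEq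
        hev).differentiableAt.differentiableWithinAt
    · rw [interior_Ioc]
      intro x hx
      show deriv (deriv (fVirt k)) x ≤ 0
      rw [(hd2 x hx).trans (htarget x hx)]
      exact hle x hx
end

section
/- Define f₂ : (0,1) → ℝ by f₂(α) := α·(3(1−α) + 2α·ln α). Then there exists α ∈ (0,1) such that f₂(α) > 0.4273, and moreover 0.4273 > 1/e. -/
/-- For `f₂(α) := α·(3(1−α) + 2α·ln α)` there exists `α ∈ (0,1)` with
`f₂(α) > 0.4273`, and moreover `0.4273 > 1/e`. -/
theorem virtualPlus_k2_bound :
    (∃ α ∈ Set.Ioo (0 : ℝ) 1,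
        α * (3 * (1 - α) + 2 * α * Real.log α) > 0.4273) ∧
      (0.4273 : ℝ) > 1 / Real.exp 1 := by
  constructor
  · refine ⟨0.38, ⟨by norm_num, by norm_num⟩, ?_⟩
    have hexp : (50 / 19 : ℝ) < Real.exp 0.9676 := by
      have h := Real.sum_le_exp_of_nonneg (x := 0.9676) (by norm_num) 9
      have hsum : (50 / 19 : ℝ) < ∑ i ∈ Finset.range 9, (0.9676 : ℝ) ^ i / i.factorial := by
        simp [Finset.sum_range_succ, Nat.factorial]
        norm_num
      linarith
    have h1 : Real.exp (-0.9676) < 0.38 := by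
      rw [Real.exp_neg]
      rw [inv_lt_comm₀ (Real.exp_pos _) (by norm_num)]
      calc (0.38 : ℝ)⁻¹ = 50 / 19 := by norm_num
        _ < Real.exp 0.9676 := hexp
    have hlog : (-0.9676 : ℝ) < Real.log 0.38 :=
      (Real.lt_log_iff_exp_lt (by norm_num)).2 h1
    nlinarith [hlog]
  · have h := Real.exp_one_gt_d9
    rw [gt_iff_lt, div_lt_iff₀ (Real.exp_pos 1)]
    nlinarith
end

section
/- Define f₃ : (0,1) → ℝ by f₃(α) := α³·(−19/8 + (15/4)·ln α − (9/4)·(ln α)²) + (19/8)·α. Then there exists α ∈ (0,1) such that f₃(α) ≥ 0.457. -/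
lemma exp_094_lb : (2.5599810 : ℝ) ≤ Real.exp 0.94 := by
  have h := Real.exp_bound (x := 0.94) (by rw [abs_of_nonneg] <;> norm_num) (n := 10) (by norm_num)
  rw [abs_le, abs_of_nonneg (by norm_num : (0:ℝ) ≤ 0.94)] at h
  norm_num [Finset.sum_range_succ, Nat.factorial] at h
  linarith [h.1]

lemma exp_094_ub : Real.exp 0.94 ≤ (2.5599815 : ℝ) := by
  have h := Real.exp_bound (x := 0.94) (by rw [abs_of_nonneg] <;> norm_num) (n := 10) (by norm_num)
  rw [abs_le, abs_of_nonneg (by norm_num : (0:ℝ) ≤ 0.94)] at h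
  norm_num [Finset.sum_range_succ, Nat.factorial] at h
  linarith [h.2]

/-- For `f₃(α) := α³·(−19/8 + (15/4)·ln α − (9/4)·(ln α)²) + (19/8)·α`
there exists `α ∈ (0,1)` with `f₃(α) ≥ 0.457`. -/
theorem virtualPlus_k3_bound :
    ∃ α ∈ Set.Ioo (0 : ℝ) 1,
      α ^ 3 * (-(19 / 8) + (15 / 4) * Real.log α - (9 / 4) * Real.log α ^ 2) +
          (19 / 8) * α ≥ 0.457 := by
  refine ⟨Real.exp (-0.94), ⟨Real.exp_pos _, Real.exp_lt_one_iff.mpr (by norm_num)⟩, ?_⟩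
  rw [Real.log_exp]
  set x : ℝ := Real.exp (-0.94) with hx
  have hE : Real.exp 0.94 * x = 1 := by
    rw [hx, ← Real.exp_add]; norm_num
  have hpos : (0 : ℝ) < Real.exp 0.94 := Real.exp_pos _
  have hxlo : (1 : ℝ) / 2.5599815 ≤ x := by
    rw [div_le_iff₀ (by norm_num)]
    nlinarith [exp_094_ub, Real.exp_pos (-0.94 : ℝ)]
  have hxhi : x ≤ 1 / 2.5599810 := by
    rw [le_div_iff₀ (by norm_num)]
    nlinarith [exp_094_lb, Real.exp_pos (-0.94 : ℝ)]
  have hxpos : (0 : ℝ) < x := Real.exp_pos _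
  nlinarith [hxlo, hxhi, sq_nonneg x, mul_pos hxpos hxpos,
    mul_nonneg (mul_nonneg (sub_nonneg.mpr hxlo) (sub_nonneg.mpr hxhi)) hxpos.le,
    mul_nonneg (sub_nonneg.mpr hxlo) (sub_nonneg.mpr hxhi)]
end

section
/- Define f₄ : (0,1) → ℝ by f₄(α) := α⁴·(−175/81 + (148/27)·ln α − (56/9)·(ln α)² + (32/9)·(ln α)³) + (175/81)·α. Then there exists α ∈ (0,1) such that f₄(α) ≥ 0.4769. -/
lemma exp_neg946_bounds :
    (0.38829108 : ℝ) ≤ Real.exp (-(473/500)) ∧ Real.exp (-(473/500)) ≤ 0.38829109 := by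
  have h := Real.exp_bound (x := (-(473/500) : ℝ)) (by rw [abs_of_nonpos] <;> norm_num)
    (n := 12) (by norm_num)
  rw [abs_le] at h
  have hs : (∑ i ∈ Finset.range 12, (-(473/500) : ℝ) ^ i / (Nat.factorial i)) =
      688003265537233995357519199580709593/1771875000000000000000000000000000000 := by
    simp [Finset.sum_range_succ, Nat.factorial]
    norm_num
  rw [hs] at h
  have habs : |(-(473/500) : ℝ)| = 473/500 := by rw [abs_of_nonpos] <;> norm_num
  rw [habs] at h
  have hnum : ((473:ℝ) / 500) ^ 12 * ((Nat.succ 12 : ℕ) / ((Nat.factorial 12 : ℕ) * (12:ℕ))) ≤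
      15/10000000000 := by
    norm_num [Nat.factorial]
  have hnum' : (0:ℝ) ≤ ((473:ℝ) / 500) ^ 12 * ((Nat.succ 12 : ℕ) / ((Nat.factorial 12 : ℕ) * (12:ℕ))) := by
    positivity
  constructor <;> push_cast at h hnum hnum' ⊢ <;> nlinarith [h.1, h.2, hnum, hnum']

/-- For
`f₄(α) := α⁴·(−175/81 + (148/27)·ln α − (56/9)·(ln α)² + (32/9)·(ln α)³) + (175/81)·α`
there exists `α ∈ (0,1)` with `f₄(α) ≥ 0.4769`. -/
theorem virtualPlus_k4_bound :
    ∃ α ∈ Set.Ioo (0 : ℝ) 1,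
      α ^ 4 * (-(175 / 81) + (148 / 27) * Real.log α - (56 / 9) * Real.log α ^ 2 +
            (32 / 9) * Real.log α ^ 3) +
          (175 / 81) * α ≥ 0.4769 := by
  refine ⟨Real.exp (-(473/500)), ⟨Real.exp_pos _, ?_⟩, ?_⟩
  · exact Real.exp_lt_one_iff.mpr (by norm_num)
  · obtain ⟨hL, hU⟩ := exp_neg946_bounds
    set e := Real.exp (-(473/500)) with he
    have hlog : Real.log e = -(473/500) := Real.log_exp _
    rw [hlog]
    have hA : (-(175 / 81 : ℝ) + (148 / 27) * (-(473/500)) - (56 / 9) * (-(473/500)) ^ 2 +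
        (32 / 9) * (-(473/500)) ^ 3) = -(2519296364/158203125) := by norm_num
    rw [hA]
    have hepos : (0:ℝ) ≤ e := (Real.exp_pos _).le
    have h4 : e ^ 4 ≤ (0.38829109:ℝ) ^ 4 := by
      exact pow_le_pow_left₀ hepos hU 4
    nlinarith [h4, hL]
end

section
/- Fix α ∈ (0,1) and for each integer n ≥ 3 set t_n := ⌈αn⌉. Define S_n := (t_n(t_n−1)/n) · ∑_{j=t_n}^{n−1} (1/(j(j−1))) · (1 + 2·∑_{p=t_n+1}^{j} 1/(p−1)). Then liminf_{n→∞} S_n ≥ α·(3(1−α) + 2α·ln α). -/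
open Filter

lemma vp_shift_sum (t m : ℕ) :
    ∑ p ∈ Finset.Icc (t+1) (m+1), (1:ℝ) / ((p:ℝ) - 1)
      = ∑ q ∈ Finset.Icc t m, (1:ℝ)/(q:ℝ) := by
  rw [← Finset.map_add_right_Icc, Finset.sum_map]
  refine Finset.sum_congr rfl fun q hq => ?_
  simp [addRightEmbedding]

lemma vp_key_identity (t : ℕ) (ht : 2 ≤ t) :
    ∀ m, t ≤ m →
    ∑ j ∈ Finset.Icc t m, (1 / ((j:ℝ) * ((j:ℝ) - 1))) *
        (1 + 2 * ∑ p ∈ Finset.Icc (t+1) j, 1 / ((p:ℝ) - 1))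
      = 1/((t:ℝ)-1) - (1 + 2 * ∑ q ∈ Finset.Icc t m, 1/(q:ℝ))/(m:ℝ)
        + 2 * ∑ j ∈ Finset.Icc t m, 1/((j:ℝ))^2 := by
  have ht0 : (t:ℝ) ≠ 0 := by positivity
  have ht2 : (2:ℝ) ≤ (t:ℝ) := by exact_mod_cast ht
  have ht1 : (t:ℝ) - 1 ≠ 0 := by nlinarith
  refine Nat.le_induction ?_ ?_
  · rw [Finset.Icc_self, Finset.sum_singleton, Finset.sum_singleton, Finset.sum_singleton,
      Finset.Icc_eq_empty (by omega), Finset.sum_empty]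
    field_simp
    ring
  · intro m hm ih
    have hm2 : (2:ℝ) ≤ (m:ℝ) := le_trans ht2 (by exact_mod_cast hm)
    have hm0 : (m:ℝ) ≠ 0 := by nlinarith
    have hm1 : (m:ℝ) + 1 ≠ 0 := by nlinarith
    rw [Finset.sum_Icc_succ_top (by omega : t ≤ m+1), vp_shift_sum t m, ih,
      Finset.sum_Icc_succ_top (by omega : t ≤ m+1) (fun q => 1/(q:ℝ)),
      Finset.sum_Icc_succ_top (by omega : t ≤ m+1) (fun j => 1/((j:ℝ))^2)]
    push_cast
    generalize ∑ q ∈ Finset.Icc t m, 1/(q:ℝ) = A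
    generalize ∑ j ∈ Finset.Icc t m, 1/((j:ℝ))^2 = B
    have hm3 : (m:ℝ) + 1 - 1 ≠ 0 := by simpa using hm0
    field_simp
    ring

lemma vp_log_step (q : ℕ) (hq : 2 ≤ q) :
    1/(q:ℝ) ≤ Real.log q - Real.log ((q:ℝ)-1) := by
  have hq2 : (2:ℝ) ≤ (q:ℝ) := by exact_mod_cast hq
  have h1 : (0:ℝ) < (q:ℝ) - 1 := by linarith
  have h0 : (0:ℝ) < (q:ℝ) := by linarith
  have hx : (0:ℝ) < ((q:ℝ)-1)/(q:ℝ) := by positivity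
  have := Real.log_le_sub_one_of_pos hx
  rw [Real.log_div (by linarith) (by linarith)] at this
  have : Real.log ((q:ℝ)-1) - Real.log q ≤ ((q:ℝ)-1)/(q:ℝ) - 1 := this
  have heq : ((q:ℝ)-1)/(q:ℝ) - 1 = -(1/(q:ℝ)) := by field_simp; ring
  linarith [heq ▸ this]

lemma vp_harmonic_le (t : ℕ) (ht : 2 ≤ t) :
    ∀ m, t ≤ m → ∑ q ∈ Finset.Icc t m, 1/(q:ℝ) ≤ Real.log m - Real.log ((t:ℝ)-1) := by
  refine Nat.le_induction ?_ ?_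
  · rw [Finset.Icc_self, Finset.sum_singleton]
    exact vp_log_step t ht
  · intro m hm ih
    rw [Finset.sum_Icc_succ_top (by omega : t ≤ m+1)]
    have h := vp_log_step (m+1) (by omega)
    push_cast at h ⊢
    have e : (m:ℝ)+1-1 = m := by ring
    rw [e] at h
    linarith

lemma vp_sq_ge (t : ℕ) (ht : 1 ≤ t) :
    ∀ m, t ≤ m → 1/(t:ℝ) - 1/((m:ℝ)+1) ≤ ∑ j ∈ Finset.Icc t m, 1/((j:ℝ))^2 := by
  have step : ∀ j : ℕ, 1 ≤ j → 1/(j:ℝ) - 1/((j:ℝ)+1) ≤ 1/((j:ℝ))^2 := by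
    intro j hj
    have hj1 : (1:ℝ) ≤ (j:ℝ) := by exact_mod_cast hj
    have h0 : (0:ℝ) < (j:ℝ) := by linarith
    have heq : 1/(j:ℝ) - 1/((j:ℝ)+1) = 1/((j:ℝ)*((j:ℝ)+1)) := by
      rw [div_sub_div _ _ (by linarith) (by linarith)]
      ring_nf
    rw [heq]
    exact one_div_le_one_div_of_le (by positivity) (by nlinarith)
  refine Nat.le_induction ?_ ?_
  · rw [Finset.Icc_self, Finset.sum_singleton]
    exact step t ht
  · intro m hm ih
    rw [Finset.sum_Icc_succ_top (by omega : t ≤ m+1)]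
    have h := step (m+1) (by omega)
    push_cast at h ⊢
    linarith

lemma vp_sq_le (t : ℕ) (ht : 2 ≤ t) :
    ∀ m, t ≤ m → ∑ j ∈ Finset.Icc t m, 1/((j:ℝ))^2 ≤ 1/((t:ℝ)-1) - 1/(m:ℝ) := by
  have step : ∀ j : ℕ, 2 ≤ j → 1/((j:ℝ))^2 ≤ 1/((j:ℝ)-1) - 1/(j:ℝ) := by
    intro j hj
    have hj2 : (2:ℝ) ≤ (j:ℝ) := by exact_mod_cast hj
    have heq : 1/((j:ℝ)-1) - 1/(j:ℝ) = 1/(((j:ℝ)-1)*(j:ℝ)) := by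
      rw [div_sub_div _ _ (by nlinarith) (by nlinarith)]
      ring_nf
    rw [heq]
    exact one_div_le_one_div_of_le (by nlinarith) (by nlinarith)
  refine Nat.le_induction ?_ ?_
  · rw [Finset.Icc_self, Finset.sum_singleton]
    exact step t ht
  · intro m hm ih
    rw [Finset.sum_Icc_succ_top (by omega : t ≤ m+1)]
    have h := step (m+1) (by omega)
    push_cast at h ⊢
    have e : (m:ℝ)+1-1 = m := by ring
    rw [e] at h
    linarith

set_option maxHeartbeats 1600000 in
/-- Fix `α ∈ (0,1)` and set `t_n := ⌈αn⌉`. With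
`S_n := (t_n(t_n−1)/n) · ∑_{j=t_n}^{n−1} (1/(j(j−1))) · (1 + 2·∑_{p=t_n+1}^{j} 1/(p−1))`,
one has `liminf_{n→∞} S_n ≥ α·(3(1−α) + 2α·ln α)`. -/
theorem virtualPlus_k2_liminf
    (α : ℝ) (hα : α ∈ Set.Ioo (0 : ℝ) 1) :
    Filter.liminf
      (fun n : ℕ =>
        ((⌈α * n⌉₊ : ℝ) * ((⌈α * n⌉₊ : ℝ) - 1) / (n : ℝ)) *
          ∑ j ∈ Finset.Icc (⌈α * n⌉₊) (n - 1),
            (1 / ((j : ℝ) * ((j : ℝ) - 1))) *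
              (1 + 2 * ∑ p ∈ Finset.Icc (⌈α * n⌉₊ + 1) j, 1 / ((p : ℝ) - 1)))
      Filter.atTop ≥
      α * (3 * (1 - α) + 2 * α * Real.log α) := by
  obtain ⟨hα0, hα1⟩ := hα
  set S : ℕ → ℝ := fun n : ℕ =>
        ((⌈α * n⌉₊ : ℝ) * ((⌈α * n⌉₊ : ℝ) - 1) / (n : ℝ)) *
          ∑ j ∈ Finset.Icc (⌈α * n⌉₊) (n - 1),
            (1 / ((j : ℝ) * ((j : ℝ) - 1))) *
              (1 + 2 * ∑ p ∈ Finset.Icc (⌈α * n⌉₊ + 1) j, 1 / ((p : ℝ) - 1)) with hS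
  set E : ℕ → ℝ := fun n : ℕ =>
      ((⌈α * n⌉₊ : ℝ)/n) - ((⌈α * n⌉₊ : ℝ)/n) * (((⌈α * n⌉₊ : ℝ)-1)/((n:ℝ)-1)) *
        (1 - 2 * Real.log (((⌈α * n⌉₊ : ℝ)-1)/((n:ℝ)-1)))
      + 2*(((⌈α * n⌉₊ : ℝ)-1)/n) - 2*((⌈α * n⌉₊ : ℝ)/n)*(((⌈α * n⌉₊ : ℝ)-1)/n) with hEdef
  -- limits
  have hu : Filter.Tendsto (fun n : ℕ => (⌈α * n⌉₊ : ℝ) / n) atTop (nhds α) := by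
    have hup : Filter.Tendsto (fun n : ℕ => α + 1/(n:ℝ)) atTop (nhds α) := by
      simpa using (tendsto_const_nhds : Tendsto (fun _ : ℕ => α) atTop (nhds α)).add tendsto_one_div_atTop_nhds_zero_nat
    refine tendsto_of_tendsto_of_tendsto_of_le_of_le' tendsto_const_nhds hup ?_ ?_
    · filter_upwards [eventually_ge_atTop 1] with n hn
      have hn0 : (0:ℝ) < (n:ℝ) := by exact_mod_cast hn
      rw [le_div_iff₀ hn0]
      exact Nat.le_ceil _
    · filter_upwards [eventually_ge_atTop 1] with n hn
      have hn0 : (0:ℝ) < (n:ℝ) := by exact_mod_cast hn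
      rw [div_le_iff₀ hn0]
      have := (Nat.ceil_lt_add_one (by positivity : (0:ℝ) ≤ α * n)).le
      calc (⌈α * n⌉₊:ℝ) ≤ α * n + 1 := this
        _ = (α + 1/n) * n := by field_simp
  have hv : Filter.Tendsto (fun n : ℕ => ((⌈α * n⌉₊ : ℝ) - 1) / n) atTop (nhds α) := by
    have := hu.sub tendsto_one_div_atTop_nhds_zero_nat
    simp only [sub_zero] at this
    refine this.congr fun n => ?_
    rw [← sub_div]
  have hq1 : Filter.Tendsto (fun n : ℕ => (n:ℝ)/((n:ℝ)-1)) atTop (nhds 1) := by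
    have h2 : Filter.Tendsto (fun n : ℕ => 1 - 1/(n:ℝ)) atTop (nhds 1) := by
      simpa using (tendsto_const_nhds : Tendsto (fun _ : ℕ => (1:ℝ)) atTop (nhds 1)).sub tendsto_one_div_atTop_nhds_zero_nat
    have h3 := h2.inv₀ one_ne_zero
    simp only [inv_one] at h3
    refine h3.congr' ?_
    filter_upwards [eventually_ge_atTop 1] with n hn
    have hn0 : (n:ℝ) ≠ 0 := by positivity
    rw [show 1 - 1/(n:ℝ) = ((n:ℝ)-1)/n by field_simp, inv_div]
  have hw : Filter.Tendsto (fun n : ℕ => ((⌈α * n⌉₊ : ℝ) - 1) / ((n:ℝ)-1)) atTop (nhds α) := by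
    have := hv.mul hq1
    simp only [mul_one] at this
    refine this.congr' ?_
    filter_upwards [eventually_ge_atTop 2] with n hn
    have hn0 : (n:ℝ) ≠ 0 := by positivity
    have hn2 : (2:ℝ) ≤ (n:ℝ) := by exact_mod_cast hn
    have hn1 : (n:ℝ) - 1 ≠ 0 := by nlinarith
    field_simp
  have hlog := hw.log (ne_of_gt hα0)
  have hone : Filter.Tendsto (fun _ : ℕ => (1:ℝ)) atTop (nhds 1) := tendsto_const_nhds
  have hE : Filter.Tendsto E atTop (nhds (α * (3 * (1 - α) + 2 * α * Real.log α))) := by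
    have h := ((hu.sub ((hu.mul hw).mul (hone.sub (hlog.const_mul 2)))).add
      ((hv.const_mul 2))).sub ((hu.mul hv).const_mul 2)
    have heq : α - α * α * (1 - 2 * Real.log α) + 2 * α - 2 * (α * α)
        = α * (3 * (1 - α) + 2 * α * Real.log α) := by ring
    rw [heq] at h
    refine h.congr fun n => ?_
    simp only [hEdef]
    ring
  -- eventual bounds
  have hn1ev : ∀ᶠ n : ℕ in atTop, 2/α ≤ (n:ℝ) :=
    tendsto_natCast_atTop_atTop.eventually_ge_atTop _
  have hn2ev : ∀ᶠ n : ℕ in atTop, 2/(1-α) ≤ (n:ℝ) :=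
    tendsto_natCast_atTop_atTop.eventually_ge_atTop _
  have hev : ∀ᶠ n : ℕ in atTop, E n ≤ S n ∧ S n ≤ 3*(α+1) := by
    filter_upwards [hn1ev, hn2ev, eventually_ge_atTop 3] with n h1 h2 h3
    simp only [hS, hEdef]
    set t := ⌈α * n⌉₊ with htdef
    have hN3 : (3:ℝ) ≤ (n:ℝ) := by exact_mod_cast h3
    have hN0 : (0:ℝ) < (n:ℝ) := by linarith
    have han : (2:ℝ) ≤ α * n := by
      rw [div_le_iff₀ hα0] at h1; linarith [h1]
    have htlow : α * n ≤ (t:ℝ) := Nat.le_ceil _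
    have htup : (t:ℝ) < α * n + 1 := Nat.ceil_lt_add_one (by positivity)
    have ht2 : 2 ≤ t := by
      have h' : (2:ℝ) ≤ (t:ℝ) := le_trans han htlow
      exact_mod_cast h'
    have haux : (2:ℝ) ≤ (1-α) * n := by
      rw [div_le_iff₀ (by linarith)] at h2; linarith [h2]
    have htnR : (t:ℝ) < (n:ℝ) - 1 := by nlinarith
    have htn : t + 1 ≤ n - 1 := by
      have h' : (t:ℝ) + 1 < (n:ℝ) := by linarith
      have h4 : t + 1 < n := by exact_mod_cast h'
      omega
    have hmn : t ≤ n - 1 := by omega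
    have hcast : ((n - 1 : ℕ) : ℝ) = (n:ℝ) - 1 := by
      have h' : 1 ≤ n := by omega
      push_cast [Nat.cast_sub h']
      ring
    have hT2 : (2:ℝ) ≤ (t:ℝ) := le_trans han htlow
    have hT0 : (t:ℝ) ≠ 0 := by nlinarith
    have hT1 : (t:ℝ) - 1 ≠ 0 := by nlinarith
    have hT1pos : (0:ℝ) < (t:ℝ) - 1 := by nlinarith
    have hN0' : (n:ℝ) ≠ 0 := by nlinarith
    have hN1 : (n:ℝ) - 1 ≠ 0 := by nlinarith
    have hN1pos : (0:ℝ) < (n:ℝ) - 1 := by nlinarith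
    have hid := vp_key_identity t ht2 (n-1) hmn
    rw [hcast] at hid
    rw [hid]
    set H := ∑ q ∈ Finset.Icc t (n-1), 1/(q:ℝ) with hHdef
    set Sig2 := ∑ j ∈ Finset.Icc t (n-1), 1/((j:ℝ))^2 with hSigdef
    have hH : H ≤ Real.log ((n:ℝ)-1) - Real.log ((t:ℝ)-1) := by
      have h' := vp_harmonic_le t ht2 (n-1) hmn
      rw [hcast] at h'
      exact h'
    have hH0 : 0 ≤ H := Finset.sum_nonneg fun q _ => by positivity
    have hSiglo : 1/(t:ℝ) - 1/(n:ℝ) ≤ Sig2 := by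
      have h' := vp_sq_ge t (by omega) (n-1) hmn
      rw [hcast] at h'
      have e : (n:ℝ) - 1 + 1 = (n:ℝ) := by ring
      rw [e] at h'
      exact h'
    have hSighi : Sig2 ≤ 1/((t:ℝ)-1) := by
      have h' := vp_sq_le t ht2 (n-1) hmn
      rw [hcast] at h'
      have hpos : 0 < 1/((n:ℝ)-1) := by positivity
      linarith
    have hpref : 0 ≤ (t:ℝ) * ((t:ℝ)-1) / (n:ℝ) := by positivity
    constructor
    · -- lower bound : E n ≤ S n
      have hbr : 1/((t:ℝ)-1)
            - (1 + 2*(Real.log ((n:ℝ)-1) - Real.log ((t:ℝ)-1)))/((n:ℝ)-1)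
            + 2*(1/(t:ℝ) - 1/(n:ℝ))
          ≤ 1/((t:ℝ)-1) - (1 + 2*H)/((n:ℝ)-1) + 2*Sig2 := by
        have hdiv : (1 + 2*H)/((n:ℝ)-1)
            ≤ (1 + 2*(Real.log ((n:ℝ)-1) - Real.log ((t:ℝ)-1)))/((n:ℝ)-1) := by
          exact (div_le_div_iff_of_pos_right hN1pos).mpr (by linarith)
        linarith
      have key := mul_le_mul_of_nonneg_left hbr hpref
      refine le_trans (le_of_eq ?_) key
      rw [Real.log_div hT1 hN1]
      field_simp
      ring
    · -- upper bound : S n ≤ 3(α+1)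
      have hnonneg : 0 ≤ (1 + 2*H)/((n:ℝ)-1) := by positivity
      have h2S : 2*Sig2 ≤ 2/((t:ℝ)-1) := by
        have e : 2*(1/((t:ℝ)-1)) = 2/((t:ℝ)-1) := by ring
        linarith
      have hbr : 1/((t:ℝ)-1) - (1 + 2*H)/((n:ℝ)-1) + 2*Sig2 ≤ 3/((t:ℝ)-1) := by
        have e : 1/((t:ℝ)-1) + 2/((t:ℝ)-1) = 3/((t:ℝ)-1) := by ring
        linarith
      have hSle := mul_le_mul_of_nonneg_left hbr hpref
      refine le_trans hSle ?_
      have heq2 : ((t:ℝ) * ((t:ℝ)-1) / (n:ℝ)) * (3/((t:ℝ)-1)) = 3 * ((t:ℝ)/(n:ℝ)) := by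
        field_simp
      rw [heq2]
      have hTN : (t:ℝ)/(n:ℝ) ≤ α + 1 := by
        rw [div_le_iff₀ hN0]
        nlinarith
      linarith
  rw [ge_iff_le, ← hE.liminf_eq]
  exact Filter.liminf_le_liminf (hev.mono fun n h => h.1) hE.isBoundedUnder_ge
    (Filter.isCoboundedUnder_ge_of_eventually_le atTop (hev.mono fun n h => h.2))
end

section
/- Let (Ω, μ) be a probability space, n ≥ 2 and 1 ≤ k < n integers, and V₁, …, V_n independent real-valued random variables on Ω. Let v₁ > v₂ > … > v_n be real numbers and set Δ := (1/2)·min_{i ≠ j} |v_i − v_j| > 0. Suppose there is σ > 0 such that for every i ∈ {1,…,n} and every ε > 0, μ({ω : |V_i(ω) − v_i| ≥ ε}) ≤ exp(−ε²/(2σ²)). Then μ({ω : V_a(ω) ≥ V_b(ω) for all 1 ≤ a ≤ k < b ≤ n}) ≥ ∏_{i=1}^{n} (1 − exp(−(2k+1−2i)²·Δ²/(2σ²))). -/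
open MeasureTheory ProbabilityTheory

/-- Let `(Ω, μ)` be a probability space, `n ≥ 2`, `1 ≤ k < n`, and
`V₁, …, V_n` independent real random variables.  Let `v₁ > … > v_n` be reals and
`Δ := (1/2)·min_{i ≠ j} |v_i − v_j| > 0`.  If for some `σ > 0` every `i` and `ε > 0`
satisfy `μ(|V_i − v_i| ≥ ε) ≤ exp(−ε²/(2σ²))`, then
`μ(V_a ≥ V_b for all 1 ≤ a ≤ k < b ≤ n) ≥ ∏_{i=1}^n (1 − exp(−(2k+1−2i)²Δ²/(2σ²)))`.
(Indices `1, …, n` are realized as `Fin n`, with `i : Fin n` standing for index `i+1`.) -/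
theorem prob_order_preserved_ge_prod
    {Ω : Type*} [MeasurableSpace Ω] (μ : Measure Ω) [IsProbabilityMeasure μ]
    (n k : ℕ) (hn : 2 ≤ n) (hk1 : 1 ≤ k) (hkn : k < n)
    (V : Fin n → Ω → ℝ) (hVmeas : ∀ i, Measurable (V i))
    (hindep : iIndepFun V μ)
    (v : Fin n → ℝ) (hv : StrictAnti v)
    (Δ : ℝ)
    (hΔdef : Δ = (1 / 2) * ⨅ p : {p : Fin n × Fin n // p.1 ≠ p.2}, |v p.1.1 - v p.1.2|)
    (hΔpos : 0 < Δ)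
    (σ : ℝ) (hσ : 0 < σ)
    (hconc : ∀ i : Fin n, ∀ ε > (0 : ℝ),
      μ {ω | |V i ω - v i| ≥ ε} ≤ ENNReal.ofReal (Real.exp (-ε ^ 2 / (2 * σ ^ 2)))) :
    μ {ω | ∀ a b : Fin n, (a : ℕ) < k → k ≤ (b : ℕ) → V a ω ≥ V b ω} ≥
      ENNReal.ofReal
        (∏ i : Fin n,
          (1 - Real.exp
            (-((2 * (k : ℝ) + 1 - 2 * ((i : ℕ) + 1)) ^ 2 * Δ ^ 2) / (2 * σ ^ 2)))) := by
  -- gap between any two distinct values is at least 2Δ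
  have hgap : ∀ i j : Fin n, i ≠ j → 2 * Δ ≤ |v i - v j| := by
    intro i j hij
    have hbdd : BddBelow (Set.range fun p : {p : Fin n × Fin n // p.1 ≠ p.2} =>
        |v p.1.1 - v p.1.2|) := ⟨0, by rintro x ⟨p, rfl⟩; positivity⟩
    have h := ciInf_le hbdd (⟨(i, j), hij⟩ : {p : Fin n × Fin n // p.1 ≠ p.2})
    simp only [hΔdef]; linarith
  -- chain bound
  have hchain : ∀ d : ℕ, ∀ i j : Fin n, (j : ℕ) = (i : ℕ) + d →
      2 * Δ * d ≤ v i - v j := by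
    intro d
    induction d with
    | zero =>
      intro i j h
      have : i = j := Fin.ext (by omega)
      simp [this]
    | succ d ih =>
      intro i j h
      have hd : (i : ℕ) + d < n := by omega
      set j' : Fin n := ⟨(i : ℕ) + d, hd⟩ with hj'
      have h1 : 2 * Δ * d ≤ v i - v j' := ih i j' rfl
      have hlt : j' < j := by
        rw [Fin.lt_def]; simp [hj']; omega
      have h2 : 2 * Δ ≤ v j' - v j := by
        have hg := hgap j' j (ne_of_lt hlt)
        have hvlt : v j < v j' := hv hlt
        rw [abs_of_pos (by linarith)] at hg; linarith
      push_cast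
      linarith
  -- special indices k-1 and k, midpoint m
  have hk1n : k - 1 < n := by omega
  set a0 : Fin n := ⟨k - 1, hk1n⟩ with ha0
  set b0 : Fin n := ⟨k, hkn⟩ with hb0
  set m : ℝ := (v a0 + v b0) / 2 with hm
  have ha0b0 : v a0 - v b0 ≥ 2 * Δ := by
    have := hchain 1 a0 b0 (by simp [ha0, hb0]; omega)
    push_cast at this; linarith
  -- radii
  set e : Fin n → ℝ := fun i => |2 * (k : ℝ) + 1 - 2 * ((i : ℕ) + 1)| * Δ with he
  have heval : ∀ i : Fin n,
      ((i : ℕ) < k → e i = (2 * ((k : ℝ) - 1 - (i : ℕ)) + 1) * Δ) ∧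
      (k ≤ (i : ℕ) → e i = (2 * (((i : ℕ) : ℝ) - k) + 1) * Δ) := by
    intro i
    constructor
    · intro hik
      have hik' : ((i : ℕ) : ℝ) ≤ (k : ℝ) - 1 := by
        have : (i : ℕ) + 1 ≤ k := hik
        have := Nat.cast_le (α := ℝ).2 this
        push_cast at this; linarith
      simp only [he]
      rw [abs_of_pos (by linarith)]
      ring_nf
    · intro hik
      have hik' : ((k : ℕ) : ℝ) ≤ ((i : ℕ) : ℝ) := Nat.cast_le.2 hik
      simp only [he]
      rw [abs_of_neg (by linarith)]
      ring_nf
  have hepos : ∀ i : Fin n, 0 < e i := by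
    intro i
    rcases lt_or_ge (i : ℕ) k with hik | hik
    · rw [(heval i).1 hik]
      have hik' : ((i : ℕ) : ℝ) ≤ (k : ℝ) - 1 := by
        have : (i : ℕ) + 1 ≤ k := hik
        have := Nat.cast_le (α := ℝ).2 this
        push_cast at this; linarith
      nlinarith
    · rw [(heval i).2 hik]
      have hik' : ((k : ℕ) : ℝ) ≤ ((i : ℕ) : ℝ) := Nat.cast_le.2 hik
      nlinarith
  -- key geometric bounds
  have hupper : ∀ i : Fin n, (i : ℕ) < k → m + e i ≤ v i := by
    intro i hik
    have hcast : ((k - 1 - (i : ℕ) : ℕ) : ℝ) = (k : ℝ) - 1 - (i : ℕ) := by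
      have h1 : (k - 1 - (i : ℕ)) + (i : ℕ) + 1 = k := by omega
      have := congrArg (Nat.cast (R := ℝ)) h1
      push_cast at this; linarith
    have h1 : 2 * Δ * ((k - 1 - (i : ℕ) : ℕ) : ℝ) ≤ v i - v a0 :=
      hchain (k - 1 - (i : ℕ)) i a0 (by simp [ha0]; omega)
    rw [hcast] at h1
    rw [(heval i).1 hik]
    simp only [hm]
    nlinarith
  have hlower : ∀ i : Fin n, k ≤ (i : ℕ) → v i ≤ m - e i := by
    intro i hik
    have hcast : (((i : ℕ) - k : ℕ) : ℝ) = ((i : ℕ) : ℝ) - k := by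
      have h1 : ((i : ℕ) - k) + k = (i : ℕ) := by omega
      have := congrArg (Nat.cast (R := ℝ)) h1
      push_cast at this; linarith
    have h1 : 2 * Δ * (((i : ℕ) - k : ℕ) : ℝ) ≤ v b0 - v i :=
      hchain ((i : ℕ) - k) b0 i (by simp [hb0]; omega)
    rw [hcast] at h1
    rw [(heval i).2 hik]
    simp only [hm]
    nlinarith
  -- the good events
  set A : Fin n → Set Ω := fun i => V i ⁻¹' Metric.ball (v i) (e i) with hA
  have hAsub : (⋂ i, A i) ⊆
      {ω | ∀ a b : Fin n, (a : ℕ) < k → k ≤ (b : ℕ) → V a ω ≥ V b ω} := by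
    intro ω hω a b ha hb
    have hωa := Set.mem_iInter.1 hω a
    have hωb := Set.mem_iInter.1 hω b
    simp only [hA, Set.mem_preimage, Metric.mem_ball, Real.dist_eq] at hωa hωb
    have h1 := abs_lt.1 hωa
    have h2 := abs_lt.1 hωb
    have h3 := hupper a ha
    have h4 := hlower b hb
    linarith [h1.1, h2.2]
  -- independence: measure of intersection equals product
  have hmeasA : ∀ i, MeasurableSet (A i) :=
    fun i => (hVmeas i) measurableSet_ball
  have hprod : μ (⋂ i, A i) = ∏ i : Fin n, μ (A i) := by
    refine hindep.meas_iInter fun i => ?_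
    exact ⟨Metric.ball (v i) (e i), measurableSet_ball, rfl⟩
  -- per-factor bound
  set p : Fin n → ℝ := fun i =>
    Real.exp (-((2 * (k : ℝ) + 1 - 2 * ((i : ℕ) + 1)) ^ 2 * Δ ^ 2) / (2 * σ ^ 2)) with hp
  have hple : ∀ i, p i ≤ 1 := by
    intro i
    rw [Real.exp_le_one_iff]
    apply div_nonpos_of_nonpos_of_nonneg
    · simp only [neg_nonpos]; positivity
    · positivity
  have hppos : ∀ i, 0 < p i := fun i => Real.exp_pos _
  have hfac : ∀ i : Fin n, ENNReal.ofReal (1 - p i) ≤ μ (A i) := by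
    intro i
    have hcompl : μ (A i)ᶜ ≤ ENNReal.ofReal (p i) := by
      have hsub : (A i)ᶜ ⊆ {ω | |V i ω - v i| ≥ e i} := by
        intro ω hω
        simp only [hA, Set.mem_compl_iff, Set.mem_preimage, Metric.mem_ball,
          Real.dist_eq, not_lt] at hω
        exact hω
      have hb := hconc i (e i) (hepos i)
      have hexp : -(e i) ^ 2 / (2 * σ ^ 2)
          = -((2 * (k : ℝ) + 1 - 2 * ((i : ℕ) + 1)) ^ 2 * Δ ^ 2) / (2 * σ ^ 2) := by
        simp only [he, mul_pow, sq_abs]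
      rw [hexp] at hb
      exact le_trans (measure_mono hsub) hb
    have hsum : μ (A i) + μ (A i)ᶜ = 1 := prob_add_prob_compl (hmeasA i)
    have h1 : ENNReal.ofReal (1 - p i) + ENNReal.ofReal (p i) = 1 := by
      rw [← ENNReal.ofReal_add (by linarith [hple i]) (le_of_lt (hppos i))]
      norm_num
    have h2 : ENNReal.ofReal (1 - p i) + ENNReal.ofReal (p i)
        ≤ μ (A i) + ENNReal.ofReal (p i) := by
      rw [h1, ← hsum]
      exact add_le_add le_rfl hcompl
    exact (ENNReal.add_le_add_iff_right ENNReal.ofReal_ne_top).1 h2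
  -- conclude
  calc ENNReal.ofReal (∏ i : Fin n, (1 - p i))
      ≤ ∏ i : Fin n, ENNReal.ofReal (1 - p i) := by
        rw [← ENNReal.ofReal_prod_of_nonneg (fun i _ => by linarith [hple i])]
    _ ≤ ∏ i : Fin n, μ (A i) := Finset.prod_le_prod' fun i _ => hfac i
    _ = μ (⋂ i, A i) := hprod.symm
    _ ≤ μ {ω | ∀ a b : Fin n, (a : ℕ) < k → k ≤ (b : ℕ) → V a ω ≥ V b ω} :=
        measure_mono hAsub
end

section
/- Let n ≥ 2 and 1 ≤ k < n be integers, let v₁ > v₂ > … > v_n be real numbers, let Δ > 0 satisfy v_i − v_{i+1} ≥ 2Δ for all 1 ≤ i ≤ n−1, and set v̄ := (v_k + v_{k+1})/2. Suppose real numbers V₁, …, V_n satisfy |V_a − v_a| ≤ (2(k−a)+1)·Δ for all 1 ≤ a ≤ k and |V_b − v_b| ≤ (2(b−k)−1)·Δ for all k+1 ≤ b ≤ n. Then V_a ≥ v̄ ≥ V_b for all 1 ≤ a ≤ k < b ≤ n; in particular V_a ≥ V_b for all such a, b. -/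
/-- Let `1 ≤ k < n` be integers, `v₁ > … > v_n` reals with consecutive
gaps at least `2Δ` for some `Δ > 0`, and `v̄ := (v_k + v_{k+1})/2`.  If reals `V₁, …, V_n`
satisfy `|V_a − v_a| ≤ (2(k−a)+1)·Δ` for `1 ≤ a ≤ k` and `|V_b − v_b| ≤ (2(b−k)−1)·Δ` for
`k+1 ≤ b ≤ n`, then `V_a ≥ v̄ ≥ V_b` for all `1 ≤ a ≤ k < b ≤ n`; in particular
`V_a ≥ V_b`. -/
theorem estimates_preserve_topk_order
    (n k : ℕ) (hk1 : 1 ≤ k) (hkn : k < n)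
    (v V : ℕ → ℝ) (Δ : ℝ) (hΔ : 0 < Δ)
    (hgap : ∀ i, 1 ≤ i → i ≤ n - 1 → v i - v (i + 1) ≥ 2 * Δ)
    (hVa : ∀ a, 1 ≤ a → a ≤ k → |V a - v a| ≤ (2 * ((k : ℝ) - (a : ℝ)) + 1) * Δ)
    (hVb : ∀ b, k + 1 ≤ b → b ≤ n → |V b - v b| ≤ (2 * ((b : ℝ) - (k : ℝ)) - 1) * Δ) :
    ∀ a b, 1 ≤ a → a ≤ k → k < b → b ≤ n →
      V a ≥ (v k + v (k + 1)) / 2 ∧ (v k + v (k + 1)) / 2 ≥ V b ∧ V a ≥ V b := by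
  have chain : ∀ j i, 1 ≤ i → i ≤ j → j ≤ n → v i - v j ≥ 2 * Δ * ((j : ℝ) - (i : ℝ)) := by
    intro j
    induction j with
    | zero => intro i h1 h2 _; omega
    | succ m ih =>
      intro i h1 h2 hn
      rcases Nat.lt_or_ge i (m + 1) with hlt | hge
      · have him : i ≤ m := by omega
        have h1m : 1 ≤ m := by omega
        have hg := hgap m h1m (by omega)
        have := ih i h1 him (by omega)
        push_cast
        nlinarith
      · have : i = m + 1 := by omega
        subst this
        simp
  intro a b ha hak hkb hbn
  have hk1n : k + 1 ≤ n := hkn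
  have hva := chain k a ha hak (by omega)
  have hvb := chain b (k + 1) (by omega) hkb hbn
  have hgk := hgap k hk1 (by omega)
  have hVa' := hVa a ha hak
  have hVb' := hVb b hkb hbn
  rw [abs_le] at hVa' hVb'
  push_cast at hvb
  have hak' : (a : ℝ) ≤ (k : ℝ) := by exact_mod_cast hak
  have hkb' : (k : ℝ) + 1 ≤ (b : ℝ) := by exact_mod_cast hkb
  refine ⟨by nlinarith [hVa'.1, hVa'.2], by nlinarith [hVb'.1, hVb'.2], by nlinarith [hVa'.1, hVb'.2]⟩
end
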